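/- arXiv:1706.02450 — 3 statements merged into one kernel-verified Lean document; each statement's English description precedes it below -/
import Mathlib

section
/- Let ν > 0 and let λ : ℕ → ℝ be a sequence such that λ i ≥ λ₀ for all i, for some constant λ₀ > 0. Assume that for every t > 0 the series θ(t) := ∑_{i=0}^∞ exp(−λ_i t) converges, and that there exist real coefficients c_0, c_1, c_2, … such that for every j ∈ ℕ there is a constant C_j > 0 with |θ(t) − t^{−ν/2}(c_0 + c_1 t + ⋯ + c_j t^j)| ≤ C_j t^{j+1−ν/2} for all t ∈ (0,1]. Then the series ∑_{i=0}^∞ λ_i^{−s} converges absolutely for every s ∈ ℂ with Re s > ν/2, and there exists a function F : ℂ → ℂ that is meromorphic on all of ℂ and satisfies F(s) = ∑_{i=0}^∞ λ_i^{−s} for every s with Re s > ν/2. -/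
/-!
For `Re s > ν/2`, integrating `∫₀^∞ t^(s-1) e^(-λt) dt = Γ(s) λ^(-s)` termwise gives
`Γ(s) ∑ λᵢ^(-s) = ∫₀^∞ t^(s-1) θ(t) dt`, and finiteness of the right-hand side at real `s` is
what makes the series converge. Split the integral at `t = 1`. The part over `(1, ∞)` is entire
because `θ` decays like `e^(-λ₀ t)`. On `(0, 1]`, subtract the first `n` terms of the expansion:
the remainder is `O(t^(n - ν/2))`, so its Mellin transform is holomorphic for `Re s > ν/2 - n`,
and each subtracted term `c_k t^(k - ν/2)` contributes `c_k / (s + k - ν/2)`. These continuations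
agree where their half-planes overlap, and since `1/Γ` is entire, dividing by `Γ` gives a
meromorphic function on all of `ℂ`.
-/

open Set Filter Asymptotics Topology MeasureTheory

lemma MeasureTheory.LocallyIntegrableOn.indicator {E : Type*} [NormedAddCommGroup E]
    {μ : Measure ℝ} {g : ℝ → E} {s t : Set ℝ} (hs : IsLocallyClosed s)
    (hg : LocallyIntegrableOn g s μ) (ht : MeasurableSet t) :
    LocallyIntegrableOn (t.indicator g) s μ := by
  rw [locallyIntegrableOn_iff hs] at hg ⊢
  exact fun k hks hk => (hg k hks hk).indicator ht

section PowerExpansion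

variable {f : ℝ → ℂ} {a b : ℝ} {c : ℕ → ℂ}

def HasPowerExpansionAtZero (f : ℝ → ℂ) (a : ℝ) (c : ℕ → ℂ) : Prop :=
  ∀ n : ℕ, (fun t : ℝ => f t - ∑ k ∈ Finset.range n, c k * (t : ℂ) ^ ((k : ℂ) - a))
    =O[𝓝[>] 0] fun t => t ^ ((n : ℝ) - a)

lemma hasPowerExpansionAtZero_of_forall_succ
    (h : ∀ n : ℕ, (fun t : ℝ => f t - ∑ k ∈ Finset.range (n + 1), c k * (t : ℂ) ^ ((k : ℂ) - a))
      =O[𝓝[>] 0] fun t => t ^ (((n + 1 : ℕ) : ℝ) - a)) :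
    HasPowerExpansionAtZero f a c
  | 0 => by
    have hle : (fun t : ℝ => t ^ ((1 : ℝ) - a)) =O[𝓝[>] 0] fun t => t ^ ((0 : ℝ) - a) := by
      refine IsBigO.of_bound 1 ?_
      filter_upwards [Ioc_mem_nhdsGT zero_lt_one] with t ht
      rw [one_mul, Real.norm_of_nonneg (Real.rpow_nonneg ht.1.le _),
        Real.norm_of_nonneg (Real.rpow_nonneg ht.1.le _)]
      exact Real.rpow_le_rpow_of_exponent_ge ht.1 ht.2 (by linarith)
    have hlead : (fun t : ℝ => c 0 * (t : ℂ) ^ ((0 : ℂ) - a)) =O[𝓝[>] 0]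
        fun t => t ^ ((0 : ℝ) - a) := by
      refine IsBigO.of_bound ‖c 0‖ ?_
      filter_upwards [self_mem_nhdsWithin] with t (ht : 0 < t)
      rw [norm_mul, Complex.norm_cpow_eq_rpow_re_of_pos ht]
      simp [abs_of_nonneg (Real.rpow_nonneg ht.le _)]
    simpa using ((h 0).trans (by simpa using hle)).add hlead
  | n + 1 => h n

lemma ofReal_rpow_neg_mul_sum {t : ℝ} (ht : 0 < t) (a : ℝ) (c : ℕ → ℝ) (s : Finset ℕ) :
    ((t ^ (-a) * ∑ k ∈ s, c k * t ^ k : ℝ) : ℂ) = ∑ k ∈ s, (c k : ℂ) * (t : ℂ) ^ ((k : ℂ) - a) := by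
  have hpow (k : ℕ) : (t : ℂ) ^ ((k : ℂ) - a) = (t : ℂ) ^ k * (t : ℂ) ^ (-(a : ℂ)) := by
    rw [sub_eq_add_neg, Complex.cpow_add _ _ (Complex.ofReal_ne_zero.mpr ht.ne'),
      Complex.cpow_natCast]
  simp_rw [hpow]
  push_cast
  rw [Finset.mul_sum, Complex.ofReal_cpow ht.le]
  exact Finset.sum_congr rfl fun k _ => by push_cast; ring

lemma hasPowerExpansionAtZero_of_abs_sub_le {g : ℝ → ℝ} {c : ℕ → ℝ}
    (h : ∀ j : ℕ, ∃ C : ℝ, ∀ t ∈ Ioc (0 : ℝ) 1,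
      |g t - t ^ (-a) * ∑ k ∈ Finset.range (j + 1), c k * t ^ k| ≤ C * t ^ ((j : ℝ) + 1 - a)) :
    HasPowerExpansionAtZero (fun t => (g t : ℂ)) a fun k => (c k : ℂ) := by
  refine hasPowerExpansionAtZero_of_forall_succ fun j => ?_
  obtain ⟨C, hC⟩ := h j
  refine IsBigO.of_bound C ?_
  filter_upwards [Ioc_mem_nhdsGT zero_lt_one] with t ht
  rw [← ofReal_rpow_neg_mul_sum ht.1, ← Complex.ofReal_sub, Complex.norm_real, Real.norm_eq_abs,
    Real.norm_of_nonneg (Real.rpow_nonneg ht.1.le _)]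
  push_cast
  exact hC t ht

noncomputable def expansionRemainder (f : ℝ → ℂ) (a : ℝ) (c : ℕ → ℂ) (n : ℕ) : ℝ → ℂ :=
  (Ioc 0 1).indicator fun t => f t - ∑ k ∈ Finset.range n, c k * (t : ℂ) ^ ((k : ℂ) - a)

noncomputable def mellinContinuation (f : ℝ → ℂ) (a : ℝ) (c : ℕ → ℂ) (n : ℕ) (s : ℂ) : ℂ :=
  mellin (expansionRemainder f a c n) s + ∑ k ∈ Finset.range n, c k / (s + ((k : ℂ) - a)) +
    mellin ((Ioi 1).indicator f) s

lemma locallyIntegrableOn_expansionRemainder (hf : LocallyIntegrableOn f (Ioi 0)) (n : ℕ) :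
    LocallyIntegrableOn (expansionRemainder f a c n) (Ioi 0) := by
  refine (hf.sub (ContinuousOn.locallyIntegrableOn ?_ measurableSet_Ioi)).indicator
    isOpen_Ioi.isLocallyClosed measurableSet_Ioc
  exact continuousOn_finsetSum _ fun k _ => continuousOn_const.mul fun t ht =>
    (Complex.continuousAt_ofReal_cpow_const _ _ (Or.inr (ne_of_gt ht))).continuousWithinAt

lemma expansionRemainder_isBigO_atTop (n : ℕ) (r : ℝ) :
    expansionRemainder f a c n =O[atTop] fun t : ℝ => t ^ r := by
  refine EventuallyEq.trans_isBigO ?_ (isBigO_zero _ _)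
  filter_upwards [eventually_gt_atTop 1] with t ht
  exact indicator_of_notMem (fun h => h.2.not_gt ht) _

lemma HasPowerExpansionAtZero.expansionRemainder_isBigO (h : HasPowerExpansionAtZero f a c)
    (n : ℕ) : expansionRemainder f a c n =O[𝓝[>] 0] fun t : ℝ => t ^ (-(a - n)) := by
  rw [neg_sub]
  refine EventuallyEq.trans_isBigO ?_ (h n)
  filter_upwards [Ioc_mem_nhdsGT zero_lt_one] with t ht
  exact indicator_of_mem ht _

lemma HasPowerExpansionAtZero.mellinConvergent_expansionRemainder
    (h : HasPowerExpansionAtZero f a c) (hf : LocallyIntegrableOn f (Ioi 0)) {n : ℕ} {s : ℂ}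
    (hs : a - n < s.re) : MellinConvergent (expansionRemainder f a c n) s :=
  mellinConvergent_of_isBigO_rpow (locallyIntegrableOn_expansionRemainder hf n)
    (expansionRemainder_isBigO_atTop n _) (lt_add_one s.re) (h.expansionRemainder_isBigO n) hs

lemma HasPowerExpansionAtZero.differentiableAt_mellin_expansionRemainder
    (h : HasPowerExpansionAtZero f a c) (hf : LocallyIntegrableOn f (Ioi 0)) {n : ℕ} {s : ℂ}
    (hs : a - n < s.re) : DifferentiableAt ℂ (mellin (expansionRemainder f a c n)) s :=
  mellin_differentiableAt_of_isBigO_rpow (locallyIntegrableOn_expansionRemainder hf n)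
    (expansionRemainder_isBigO_atTop n _) (lt_add_one s.re) (h.expansionRemainder_isBigO n) hs

lemma indicator_Ioi_one_isBigO_zero (g : ℝ → ℂ) (r : ℝ) :
    (Ioi 1).indicator g =O[𝓝[>] 0] fun t : ℝ => t ^ r := by
  refine EventuallyEq.trans_isBigO ?_ (isBigO_zero _ _)
  filter_upwards [Ioo_mem_nhdsGT zero_lt_one] with t ht
  exact indicator_of_notMem (fun h => ht.2.not_gt h) _

lemma indicator_Ioi_one_isBigO_atTop {g : ℝ → ℝ} (htop : f =O[atTop] g) :
    (Ioi 1).indicator f =O[atTop] g := by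
  refine EventuallyEq.trans_isBigO ?_ htop
  filter_upwards [eventually_gt_atTop 1] with t ht
  exact indicator_of_mem ht _

lemma mellinConvergent_indicator_Ioi_one (hf : LocallyIntegrableOn f (Ioi 0)) (hb : 0 < b)
    (htop : f =O[atTop] fun t => Real.exp (-b * t)) (s : ℂ) :
    MellinConvergent ((Ioi 1).indicator f) s :=
  mellinConvergent_of_isBigO_rpow_exp hb (hf.indicator isOpen_Ioi.isLocallyClosed measurableSet_Ioi)
    (indicator_Ioi_one_isBigO_atTop htop) (indicator_Ioi_one_isBigO_zero f _) (sub_one_lt s.re)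

lemma differentiable_mellin_indicator_Ioi_one (hf : LocallyIntegrableOn f (Ioi 0)) (hb : 0 < b)
    (htop : f =O[atTop] fun t => Real.exp (-b * t)) :
    Differentiable ℂ (mellin ((Ioi 1).indicator f)) := fun s =>
  mellin_differentiableAt_of_isBigO_rpow_exp hb
    (hf.indicator isOpen_Ioi.isLocallyClosed measurableSet_Ioi)
    (indicator_Ioi_one_isBigO_atTop htop) (indicator_Ioi_one_isBigO_zero f _) (sub_one_lt s.re)

lemma expansionRemainder_eq_succ_add (n : ℕ) :
    expansionRemainder f a c n = fun t => expansionRemainder f a c (n + 1) t +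
      c n • (Ioc 0 1).indicator (fun t : ℝ => (t : ℂ) ^ ((n : ℂ) - a)) t := by
  funext t
  by_cases ht : t ∈ Ioc (0 : ℝ) 1
  · simp only [expansionRemainder, indicator_of_mem ht, Finset.sum_range_succ, smul_eq_mul]
    ring
  · simp [expansionRemainder, indicator_of_notMem ht]

lemma HasPowerExpansionAtZero.mellinContinuation_succ (h : HasPowerExpansionAtZero f a c)
    (hf : LocallyIntegrableOn f (Ioi 0)) {n : ℕ} {s : ℂ} (hs : a - n < s.re) :
    mellinContinuation f a c (n + 1) s = mellinContinuation f a c n s := by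
  have hrem := h.mellinConvergent_expansionRemainder hf (n := n + 1) (s := s)
    (by push_cast; linarith)
  have hpow := hasMellin_cpow_Ioc ((n : ℂ) - a) (s := s) (by simp; linarith)
  have hsplit := hasMellin_add hrem (hasMellin_const_smul hpow.1 (c n)).1
  rw [mellinContinuation, mellinContinuation, expansionRemainder_eq_succ_add n, hsplit.2,
    mellin_const_smul, hpow.2, Finset.sum_range_succ, smul_eq_mul, mul_one_div]
  ring

lemma HasPowerExpansionAtZero.mellinContinuation_eq (h : HasPowerExpansionAtZero f a c)
    (hf : LocallyIntegrableOn f (Ioi 0)) {n m : ℕ} {s : ℂ} (hn : a - n < s.re)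
    (hm : a - m < s.re) : mellinContinuation f a c n s = mellinContinuation f a c m s := by
  wlog hnm : n ≤ m generalizing n m
  · exact (this hm hn (le_of_not_ge hnm)).symm
  induction m, hnm using Nat.le_induction with
  | base => rfl
  | succ m hnm ih =>
    have : (n : ℝ) ≤ m := by exact_mod_cast hnm
    rw [h.mellinContinuation_succ hf (by linarith), ih (by linarith)]

lemma HasPowerExpansionAtZero.mellinContinuation_zero (h : HasPowerExpansionAtZero f a c)
    (hf : LocallyIntegrableOn f (Ioi 0)) (hb : 0 < b)
    (htop : f =O[atTop] fun t => Real.exp (-b * t)) {s : ℂ} (hs : a < s.re) :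
    mellinContinuation f a c 0 s = mellin f s := by
  have h0 := h.mellinConvergent_expansionRemainder hf (n := 0) (s := s) (by simpa using hs)
  have h1 := mellinConvergent_indicator_Ioi_one hf hb htop s
  rw [mellinContinuation, Finset.sum_range_zero, add_zero, ← (hasMellin_add h0 h1).2]
  refine setIntegral_congr_fun measurableSet_Ioi fun t (ht : 0 < t) => ?_
  by_cases ht1 : t ≤ 1
  · simp [expansionRemainder, ht, ht1]
  · simp [expansionRemainder, ht1, not_le.mp ht1]

lemma HasPowerExpansionAtZero.meromorphicOn_mellinContinuation
    (h : HasPowerExpansionAtZero f a c) (hf : LocallyIntegrableOn f (Ioi 0)) (hb : 0 < b)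
    (htop : f =O[atTop] fun t => Real.exp (-b * t)) (n : ℕ) :
    MeromorphicOn (mellinContinuation f a c n) {s | a - n < s.re} := by
  have hrem : MeromorphicOn (mellin (expansionRemainder f a c n)) {s | a - n < s.re} :=
    (DifferentiableOn.analyticOnNhd
      (fun s hs => (h.differentiableAt_mellin_expansionRemainder hf hs).differentiableWithinAt)
      (isOpen_lt continuous_const Complex.continuous_re)).meromorphicOn
  have hpoles : MeromorphicOn (fun s : ℂ => ∑ k ∈ Finset.range n, c k / (s + ((k : ℂ) - a)))
      {s | a - n < s.re} :=
    MeromorphicOn.fun_sum fun k x _ => by fun_prop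
  have htail : MeromorphicOn (mellin ((Ioi 1).indicator f)) {s | a - n < s.re} :=
    fun x _ => ((differentiable_mellin_indicator_Ioi_one hf hb htop).analyticAt x).meromorphicAt
  exact (hrem.add hpoles).add htail

theorem HasPowerExpansionAtZero.exists_meromorphic_eq_mellin (h : HasPowerExpansionAtZero f a c)
    (hf : LocallyIntegrableOn f (Ioi 0)) (hb : 0 < b)
    (htop : f =O[atTop] fun t => Real.exp (-b * t)) :
    ∃ M : ℂ → ℂ, Meromorphic M ∧ ∀ s : ℂ, a < s.re → M s = mellin f s := by
  let order (s : ℂ) : ℕ := ⌈a - s.re⌉₊ + 1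
  have h_order (s : ℂ) : a - order s < s.re := by
    have := Nat.le_ceil (a - s.re)
    push_cast [order]
    linarith
  refine ⟨fun s => mellinContinuation f a c (order s) s, fun x => ?_, fun s hs => ?_⟩
  · refine (h.meromorphicOn_mellinContinuation hf hb htop (order x)).congr
      (fun s hs => h.mellinContinuation_eq hf hs (h_order s))
      (isOpen_lt continuous_const Complex.continuous_re) x (h_order x)
  · show mellinContinuation f a c (order s) s = mellin f s
    rw [h.mellinContinuation_eq hf (h_order s) (m := 0) (by simpa using hs),
      h.mellinContinuation_zero hf hb htop hs]

end PowerExpansion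

section HeatTrace

variable {ι : Type*} {lam : ι → ℝ}

noncomputable def heatTrace (lam : ι → ℝ) (t : ℝ) : ℝ := ∑' i, Real.exp (-(lam i) * t)

lemma heatTrace_nonneg (t : ℝ) : 0 ≤ heatTrace lam t :=
  tsum_nonneg fun _ => (Real.exp_pos _).le

lemma antitoneOn_heatTrace (hlam : ∀ i, 0 ≤ lam i)
    (hθ : ∀ t, 0 < t → Summable fun i => Real.exp (-(lam i) * t)) :
    AntitoneOn (heatTrace lam) (Ioi 0) := fun s hs t ht hst =>
  (hθ t ht).tsum_le_tsum (fun i => Real.exp_le_exp.mpr (by nlinarith [hlam i])) (hθ s hs)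

lemma locallyIntegrableOn_heatTrace (hlam : ∀ i, 0 ≤ lam i)
    (hθ : ∀ t, 0 < t → Summable fun i => Real.exp (-(lam i) * t)) :
    LocallyIntegrableOn (fun t => (heatTrace lam t : ℂ)) (Ioi 0) := by
  rw [locallyIntegrableOn_iff isOpen_Ioi.isLocallyClosed]
  exact fun k hk hkc => (((antitoneOn_heatTrace hlam hθ).mono hk).integrableOn_isCompact hkc).ofReal

lemma heatTrace_le_of_one_le {lam0 : ℝ} (hge : ∀ i, lam0 ≤ lam i)
    (hθ : ∀ t, 0 < t → Summable fun i => Real.exp (-(lam i) * t)) {t : ℝ} (ht : 1 ≤ t) :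
    heatTrace lam t ≤ heatTrace lam 1 * Real.exp lam0 * Real.exp (-lam0 * t) := by
  have hterm (i : ι) : Real.exp (-(lam i) * t) ≤
      Real.exp (-(lam i) * 1) * (Real.exp lam0 * Real.exp (-lam0 * t)) := by
    rw [← Real.exp_add, ← Real.exp_add]
    exact Real.exp_le_exp.mpr (by nlinarith [mul_nonneg (sub_nonneg.2 (hge i)) (sub_nonneg.2 ht)])
  calc heatTrace lam t
      ≤ ∑' i, Real.exp (-(lam i) * 1) * (Real.exp lam0 * Real.exp (-lam0 * t)) :=
        (hθ t (by linarith)).tsum_le_tsum hterm ((hθ 1 one_pos).mul_right _)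
    _ = heatTrace lam 1 * Real.exp lam0 * Real.exp (-lam0 * t) := by
        rw [tsum_mul_right, heatTrace, mul_assoc]

lemma heatTrace_isBigO_atTop {lam0 : ℝ} (hge : ∀ i, lam0 ≤ lam i)
    (hθ : ∀ t, 0 < t → Summable fun i => Real.exp (-(lam i) * t)) :
    (fun t => (heatTrace lam t : ℂ)) =O[atTop] fun t => Real.exp (-lam0 * t) := by
  refine IsBigO.of_bound (heatTrace lam 1 * Real.exp lam0) ?_
  filter_upwards [eventually_ge_atTop 1] with t ht
  rw [Complex.norm_real, Real.norm_of_nonneg (heatTrace_nonneg t),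
    Real.norm_of_nonneg (Real.exp_pos _).le]
  exact heatTrace_le_of_one_le hge hθ ht

lemma summable_rpow_neg_of_mellinConvergent_heatTrace (hlam : ∀ i, 0 < lam i)
    (hθ : ∀ t, 0 < t → Summable fun i => Real.exp (-(lam i) * t)) {σ : ℝ} (hσ : 0 < σ)
    (hmellin : MellinConvergent (fun t => (heatTrace lam t : ℂ)) σ) :
    Summable fun i => lam i ^ (-σ) := by
  have hint : IntegrableOn (fun t => t ^ (σ - 1) * heatTrace lam t) (Ioi 0) := by
    refine IntegrableOn.congr_fun hmellin.norm (fun t (ht : 0 < t) => ?_) measurableSet_Ioi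
    rw [norm_smul, Complex.norm_cpow_eq_rpow_re_of_pos ht, Complex.norm_real,
      Real.norm_of_nonneg (heatTrace_nonneg t)]
    simp
  have hpartial (u : Finset ι) {t : ℝ} (ht : 0 < t) :
      ∑ i ∈ u, t ^ (σ - 1) * Real.exp (-(lam i) * t) ≤ t ^ (σ - 1) * heatTrace lam t := by
    rw [← Finset.mul_sum]
    exact mul_le_mul_of_nonneg_left
      ((hθ t ht).sum_le_tsum u fun i _ => (Real.exp_pos _).le) (Real.rpow_nonneg ht.le _)
  have hterm (i : ι) :
      IntegrableOn (fun t => t ^ (σ - 1) * Real.exp (-(lam i) * t)) (Ioi 0) := by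
    refine hint.mono' (by fun_prop) ?_
    filter_upwards [ae_restrict_mem measurableSet_Ioi] with t (ht : 0 < t)
    rw [Real.norm_of_nonneg (by positivity)]
    simpa using hpartial {i} ht
  have hgamma (i : ι) : ∫ t in Ioi 0, t ^ (σ - 1) * Real.exp (-(lam i) * t) =
      Real.Gamma σ * lam i ^ (-σ) := by
    have h := Real.integral_rpow_mul_exp_neg_mul_Ioi hσ (hlam i)
    simp_rw [← neg_mul] at h
    rw [h, one_div, Real.inv_rpow (hlam i).le, ← Real.rpow_neg (hlam i).le, mul_comm]
  refine (summable_mul_left_iff (Real.Gamma_pos_of_pos hσ).ne').mp ?_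
  refine summable_of_sum_le (c := ∫ t in Ioi 0, t ^ (σ - 1) * heatTrace lam t)
    (fun i => by have := hlam i; positivity) fun u => ?_
  calc ∑ i ∈ u, Real.Gamma σ * lam i ^ (-σ)
      = ∫ t in Ioi 0, ∑ i ∈ u, t ^ (σ - 1) * Real.exp (-(lam i) * t) := by
        rw [integral_finsetSum u fun i _ => hterm i]
        exact Finset.sum_congr rfl fun i _ => (hgamma i).symm
    _ ≤ ∫ t in Ioi 0, t ^ (σ - 1) * heatTrace lam t :=
        setIntegral_mono_on (integrable_finsetSum u fun i _ => hterm i) hint measurableSet_Ioi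
          fun t ht => hpartial u ht

lemma mellin_heatTrace [Countable ι] (hlam : ∀ i, 0 < lam i)
    (hθ : ∀ t, 0 < t → Summable fun i => Real.exp (-(lam i) * t)) {s : ℂ} (hs : 0 < s.re)
    (hsum : Summable fun i => lam i ^ (-s.re)) :
    mellin (fun t => (heatTrace lam t : ℂ)) s = Complex.Gamma s * ∑' i, (lam i : ℂ) ^ (-s) := by
  have hmellin := hasSum_mellin (a := fun _ => 1) (p := lam)
    (F := fun t => (heatTrace lam t : ℂ)) (fun i => Or.inr (hlam i)) hs
    (fun t ht => by simpa [heatTrace] using Complex.hasSum_ofReal.mpr (hθ t ht).hasSum)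
    (by simpa [Real.rpow_neg (hlam _).le] using hsum)
  rw [← hmellin.tsum_eq, ← tsum_mul_left]
  exact tsum_congr fun i => by rw [Complex.cpow_neg, mul_one, div_eq_mul_inv]

end HeatTrace

/-- **Corollary 1.2: meromorphic continuation of the spectral zeta function.**
If the eigenvalues `λ i` are bounded below by `λ₀ > 0`, the heat trace
`θ(t) = ∑ exp(-λ i * t)` converges for all `t > 0` and admits a full short time
asymptotic expansion `θ(t) ~ t^(-ν/2) (c₀ + c₁ t + c₂ t² + ⋯)`, then the spectral
zeta function `∑ (λ i)^(-s)` converges absolutely for `Re s > ν/2` and extends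
to a meromorphic function on all of `ℂ`. -/
theorem spectral_zeta_meromorphic_continuation
    (ν : ℝ) (hν : 0 < ν) (lam : ℕ → ℝ) (lam0 : ℝ) (hlam0 : 0 < lam0)
    (hge : ∀ i, lam0 ≤ lam i)
    (hθ : ∀ t : ℝ, 0 < t → Summable fun i => Real.exp (-(lam i) * t))
    (c : ℕ → ℝ)
    (hexp : ∀ j : ℕ, ∃ Cj : ℝ, 0 < Cj ∧ ∀ t ∈ Set.Ioc (0 : ℝ) 1,
      |(∑' i, Real.exp (-(lam i) * t)) -
          t ^ (-(ν / 2)) * ∑ k ∈ Finset.range (j + 1), c k * t ^ k| ≤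
        Cj * t ^ ((j : ℝ) + 1 - ν / 2)) :
    (∀ s : ℂ, ν / 2 < s.re → Summable fun i => ‖(lam i : ℂ) ^ (-s)‖) ∧
    ∃ F : ℂ → ℂ, MeromorphicOn F Set.univ ∧
      ∀ s : ℂ, ν / 2 < s.re → F s = ∑' i, (lam i : ℂ) ^ (-s) := by
  have hpos (i : ℕ) : 0 < lam i := hlam0.trans_le (hge i)
  have hloc := locallyIntegrableOn_heatTrace (fun i => (hpos i).le) hθ
  have htop := heatTrace_isBigO_atTop hge hθ
  have hexpansion : HasPowerExpansionAtZero (fun t => (heatTrace lam t : ℂ)) (ν / 2)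
      fun k => (c k : ℂ) :=
    hasPowerExpansionAtZero_of_abs_sub_le fun j => (hexp j).imp fun _ h => h.2
  have hsum (σ : ℝ) (hσ : ν / 2 < σ) : Summable fun i => lam i ^ (-σ) :=
    summable_rpow_neg_of_mellinConvergent_heatTrace hpos hθ (by linarith)
      (mellinConvergent_of_isBigO_rpow_exp hlam0 hloc htop (by simpa using hexpansion 0)
        (by simpa using hσ))
  refine ⟨fun s hs => (hsum s.re hs).congr fun i => ?_, ?_⟩
  · rw [Complex.norm_cpow_eq_rpow_re_of_pos (hpos i), Complex.neg_re]
  obtain ⟨M, hM, hMeq⟩ := hexpansion.exists_meromorphic_eq_mellin hloc hlam0 htop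
  refine ⟨fun s => (Complex.Gamma s)⁻¹ * M s,
    meromorphicOn_univ.mpr (Meromorphic.Gamma.inv.mul hM), fun s hs => ?_⟩
  have hs0 : 0 < s.re := by linarith
  show (Complex.Gamma s)⁻¹ * M s = _
  rw [hMeq s hs, mellin_heatTrace hpos hθ hs0 (hsum s.re hs),
    inv_mul_cancel_left₀ (Complex.Gamma_ne_zero_of_re_pos hs0)]
end

section
/- Let B be an n×n complex matrix and let t ≥ 0. Assume cosh(sB) is invertible for every s ∈ [0, t]. Then ∫_0^t (cosh(sB))⁻² ds = t · shc(tB) · (cosh(tB))⁻¹, an identity of n×n complex matrices, where the left-hand side is the Bochner integral of the matrix-valued function s ↦ (cosh(sB)⁻¹)². -/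
noncomputable section

open NormedSpace MeasureTheory

attribute [local instance] Matrix.linftyOpNormedRing Matrix.linftyOpNormedAlgebra

/-- The hyperbolic cosine of a square complex matrix:
`cosh X = (exp X + exp (-X)) / 2`. -/
def mcosh {n : ℕ} (X : Matrix (Fin n) (Fin n) ℂ) : Matrix (Fin n) (Fin n) ℂ :=
  (2 : ℂ)⁻¹ • (exp X + exp (-X))

/-- `shc X = ∑_{k≥0} X^(2k) / (2k+1)!`, the entire function equal to
`sinh(X) X⁻¹` for invertible `X`. -/
def mshc {n : ℕ} (X : Matrix (Fin n) (Fin n) ℂ) : Matrix (Fin n) (Fin n) ℂ :=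
  ∑' k : ℕ, (((2 * k + 1).factorial : ℂ))⁻¹ • X ^ (2 * k)

/-! The function `F(s) = s • shc(sB) * cosh(sB)⁻¹` is a primitive of `cosh(sB)⁻²`. Write `C`, `S`
for `cosh(sB)`, `sinh(sB)` and `H = s • shc(sB)`. Termwise differentiation of the series gives
`H' = C`, hence `H B = S`, as both sides have derivative `C B` and vanish at `0`. Since `H` and `S`
commute with `C`, `F' = C C⁻¹ - H C⁻¹ (B S) C⁻¹ = 1 - S² C⁻² = C⁻²` by `C² - S² = 1`. The
derivatives are computed in a complex variable and then restricted to the real line. -/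

open scoped Nat

theorem HasDerivAt.ringInverse {𝕜 R : Type*} [NontriviallyNormedField 𝕜] [NormedRing R]
    [HasSummableGeomSeries R] [NormedAlgebra 𝕜 R] {f : 𝕜 → R} {f' : R} {z : 𝕜}
    (hf : HasDerivAt f f' z) (hz : IsUnit (f z)) :
    HasDerivAt (fun w => Ring.inverse (f w))
      (-(Ring.inverse (f z) * f' * Ring.inverse (f z))) z := by
  obtain ⟨u, hu⟩ := hz
  have h := (hu ▸ hasFDerivAt_ringInverse (𝕜 := 𝕜) u).comp_hasDerivAt z hf
  rw [← hu, Ring.inverse_unit]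
  exact h.congr_deriv (by simp)

theorem HasDerivAt.comp_ofReal' {E : Type*} [NormedAddCommGroup E] [NormedSpace ℝ E]
    [NormedSpace ℂ E] [IsScalarTower ℝ ℂ E] {e : ℂ → E} {e' : E} {z : ℝ}
    (hf : HasDerivAt e e' z) : HasDerivAt (fun y : ℝ => e y) e' z :=
  (hf.scomp z Complex.ofRealCLM.hasDerivAt).congr_deriv (by simp)

theorem Commute.ringInverse_right {M₀ : Type*} [MonoidWithZero M₀] {a b : M₀} (h : Commute a b) :
    Commute a (Ring.inverse b) := by
  by_cases hb : IsUnit b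
  · obtain ⟨u, rfl⟩ := hb
    simpa only [Ring.inverse_unit] using h.units_inv_right
  · simp [Ring.inverse_non_unit b hb]

section

variable {n : ℕ}

local notation "𝕄" => Matrix (Fin n) (Fin n) ℂ

def msinh (X : 𝕄) : 𝕄 :=
  (2 : ℂ)⁻¹ • (exp X - exp (-X))

theorem Commute.mcosh_left {X Y : 𝕄} (h : Commute X Y) : Commute (mcosh X) Y :=
  (h.exp_left.add_left h.neg_left.exp_left).smul_left _

theorem Commute.msinh_left {X Y : 𝕄} (h : Commute X Y) : Commute (msinh X) Y :=
  (h.exp_left.sub_left h.neg_left.exp_left).smul_left _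

theorem Commute.mshc_left {X Y : 𝕄} (h : Commute X Y) : Commute (mshc X) Y :=
  .tsum_left _ fun _ => (h.pow_left _).smul_left _

theorem mcosh_mul_self_sub_msinh_mul_self (X : 𝕄) :
    mcosh X * mcosh X - msinh X * msinh X = 1 := by
  have h₁ : exp X * exp (-X) = 1 := by
    have h := exp_add_of_commute (Commute.refl X).neg_right
    rw [add_neg_cancel, exp_zero] at h
    exact h.symm
  have h₂ : exp (-X) * exp X = 1 := by
    have h := exp_add_of_commute (Commute.refl X).neg_left
    rw [neg_add_cancel, exp_zero] at h
    exact h.symm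
  simp only [mcosh, msinh, smul_mul_smul_comm, ← smul_sub, add_mul, mul_add, sub_mul, mul_sub,
    h₁, h₂]
  module

theorem hasDerivAt_mcosh_smul (B : 𝕄) (z : ℂ) :
    HasDerivAt (fun w : ℂ => mcosh (w • B)) (B * msinh (z • B)) z := by
  have h := ((hasDerivAt_exp_smul_const' B z).fun_add
    ((hasDerivAt_exp_smul_const' (-B) z))).fun_const_smul (2 : ℂ)⁻¹
  simp only [mcosh, ← smul_neg]
  refine h.congr_deriv ?_
  rw [msinh, smul_neg, mul_smul_comm, mul_sub, neg_mul, sub_eq_add_neg]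
  rfl

theorem hasDerivAt_msinh_smul (B : 𝕄) (z : ℂ) :
    HasDerivAt (fun w : ℂ => msinh (w • B)) (mcosh (z • B) * B) z := by
  have h := ((hasDerivAt_exp_smul_const B z).fun_sub
    ((hasDerivAt_exp_smul_const (-B) z))).fun_const_smul (2 : ℂ)⁻¹
  simp only [msinh, ← smul_neg]
  refine h.congr_deriv ?_
  rw [mcosh, smul_neg, smul_mul_assoc, add_mul, mul_neg, sub_neg_eq_add]
  rfl

theorem mcosh_eq_tsum (X : 𝕄) :
    mcosh X = ∑' k : ℕ, ((2 * k)! : ℂ)⁻¹ • X ^ (2 * k) := by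
  rw [mcosh]
  have h := (exp_series_hasSum_exp' (𝕂 := ℂ) X).add (exp_series_hasSum_exp' (𝕂 := ℂ) (-X))
  rw [← (mul_right_injective₀ two_ne_zero).hasSum_iff] at h
  · refine ((h.const_smul (2 : ℂ)⁻¹).tsum_eq.symm.trans (tsum_congr fun k => ?_))
    simp only [Function.comp_apply, (even_two_mul k).neg_pow]
    module
  · intro m hm
    have hodd : Odd m := Nat.not_even_iff_odd.1 fun ⟨k, hk⟩ => hm ⟨k, by dsimp only; omega⟩
    simp [hodd.neg_pow]

theorem hasDerivAt_smul_mshc_smul (B : 𝕄) (z : ℂ) :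
    HasDerivAt (fun w : ℂ => w • mshc (w • B)) (mcosh (z • B)) z := by
  set g : ℕ → ℂ → 𝕄 := fun k w => (w ^ (2 * k + 1) / (2 * k + 1)! : ℂ) • B ^ (2 * k)
  set g' : ℕ → ℂ → 𝕄 := fun k w => (w ^ (2 * k) / (2 * k)! : ℂ) • B ^ (2 * k)
  have hg : ∀ k w, HasDerivAt (g k) (g' k w) w := fun k w => by
    refine (((hasDerivAt_pow (2 * k + 1) w).div_const _).smul_const _).congr_deriv ?_
    simp only [g']
    congr 1
    rw [Nat.factorial_succ]
    push_cast
    exact mul_div_mul_left _ _ (by exact_mod_cast (2 * k).succ_ne_zero)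
  set r : ℝ := ‖z‖ + 1
  have hg' : ∀ k, ∀ w ∈ Metric.ball (0 : ℂ) r, ‖g' k w‖ ≤ ‖g' k r‖ := fun k w hw => by
    simp only [g', norm_smul, norm_div, norm_pow, Complex.norm_natCast]
    gcongr
    rw [Complex.norm_of_nonneg (by positivity)]
    exact (mem_ball_zero_iff.1 hw).le
  have hsum : Summable fun k => ‖g' k r‖ := by
    refine ((norm_expSeries_summable' (𝕂 := ℂ) ((r : ℂ) • B)).comp_injective
      (mul_right_injective₀ two_ne_zero)).congr fun k => ?_
    simp only [g', Function.comp_apply, smul_pow, smul_smul, div_eq_inv_mul]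
  have hH : (fun w : ℂ => w • mshc (w • B)) = fun w => ∑' k, g k w := by
    funext w
    rw [mshc, ← tsum_const_smul'']
    refine tsum_congr fun k => ?_
    simp only [g, smul_pow, smul_smul, div_eq_inv_mul]
    ring_nf
  have hC : mcosh (z • B) = ∑' k, g' k z := by
    rw [mcosh_eq_tsum]
    refine tsum_congr fun k => ?_
    simp only [g', smul_pow, smul_smul, div_eq_inv_mul]
  rw [hH, hC]
  exact hasDerivAt_tsum_of_isPreconnected hsum Metric.isOpen_ball
    (convex_ball _ _).isPreconnected (fun k w _ => hg k w) hg'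
    (Metric.mem_ball_self (by positivity)) (by simp [g]) (by simp [r])

theorem smul_mshc_smul_mul_eq_msinh (B : 𝕄) (z : ℂ) : z • mshc (z • B) * B = msinh (z • B) := by
  have hderiv (w : ℂ) :
      HasDerivAt (fun w : ℂ => w • mshc (w • B) * B - msinh (w • B)) 0 w :=
    (((hasDerivAt_smul_mshc_smul B w).mul_const B).fun_sub
      (hasDerivAt_msinh_smul B w)).congr_deriv (sub_self _)
  have h := is_const_of_deriv_eq_zero (fun w => (hderiv w).differentiableAt)
    (fun w => (hderiv w).deriv) z 0
  simpa [msinh, sub_eq_zero] using h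

theorem hasDerivAt_smul_mshc_smul_mul_ringInverse_mcosh (B : 𝕄) {z : ℂ}
    (hz : IsUnit (mcosh (z • B))) :
    HasDerivAt (fun w : ℂ => w • mshc (w • B) * Ring.inverse (mcosh (w • B)))
      (Ring.inverse (mcosh (z • B)) ^ 2) z := by
  refine ((hasDerivAt_smul_mshc_smul B z).mul
    ((hasDerivAt_mcosh_smul B z).ringInverse hz)).congr_deriv ?_
  set C := mcosh (z • B)
  set S := msinh (z • B)
  set H := z • mshc (z • B)
  set R := Ring.inverse C
  have hCR : C * R = 1 := Ring.mul_inverse_cancel C hz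
  have hHR : Commute H R :=
    ((Commute.refl (z • B)).mcosh_left.symm.mshc_left.smul_left z).ringInverse_right
  have hRS : Commute R S :=
    (Commute.refl (z • B)).mcosh_left.symm.msinh_left.ringInverse_right.symm
  have hSS : S * S = C * C - 1 := by
    rw [← mcosh_mul_self_sub_msinh_mul_self, sub_sub_cancel]
  calc C * R + H * -(R * (B * S) * R)
      = C * R - R * (H * B * (S * R)) := by
        simp only [mul_neg, mul_assoc, ← sub_eq_add_neg, hHR.left_comm]
    _ = C * R - S * S * (R * R) := by
        rw [smul_mshc_smul_mul_eq_msinh, mul_assoc, hRS.left_comm, hRS.left_comm, ← mul_assoc]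
    _ = C * R - C * (C * R) * R + R * R := by rw [hSS]; noncomm_ring
    _ = R ^ 2 := by rw [hCR, mul_one, hCR, sub_self, zero_add, sq]

end

/-- **Identity (eq.pr.22):** if `cosh(sB)` is invertible for all `s ∈ [0,t]`, then
`∫_0^t cosh(sB)⁻² ds = t ⬝ shc(tB) ⬝ cosh(tB)⁻¹`. -/
theorem integral_mcosh_inv_sq {n : ℕ}
    (B : Matrix (Fin n) (Fin n) ℂ) (t : ℝ) (ht : 0 ≤ t)
    (hinv : ∀ s ∈ Set.Icc (0 : ℝ) t, IsUnit (mcosh ((s : ℂ) • B))) :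
    (∫ s in (0 : ℝ)..t, ((mcosh ((s : ℂ) • B))⁻¹) ^ 2)
      = (t : ℂ) • (mshc ((t : ℂ) • B) * (mcosh ((t : ℂ) • B))⁻¹) := by
  rw [← Set.uIcc_of_le ht] at hinv
  have hinv_cont :
      ContinuousOn (fun s : ℝ => Ring.inverse (mcosh ((s : ℂ) • B))) (Set.uIcc 0 t) :=
    fun s hs => (HasDerivAt.comp_ofReal' (e := fun w : ℂ => Ring.inverse (mcosh (w • B)))
      ((hasDerivAt_mcosh_smul B s).ringInverse (hinv s hs))).continuousAt.continuousWithinAt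
  simp only [Matrix.nonsing_inv_eq_ringInverse]
  rw [intervalIntegral.integral_eq_sub_of_hasDerivAt
    (fun s hs => (hasDerivAt_smul_mshc_smul_mul_ringInverse_mcosh B (hinv s hs)).comp_ofReal')
    (hinv_cont.pow 2).intervalIntegrable]
  rw [Complex.ofReal_zero, zero_smul, zero_mul, sub_zero, smul_mul_assoc]
end
end

section
/- Let B be a real skew-symmetric n×n matrix (Bᵀ = −B) and denote by B_ℂ its entrywise complexification. Then det( cosh( √−1 · B_ℂ ) ) ≠ 0 and det( shc( √−1 · B_ℂ ) ) ≠ 0. -/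
noncomputable section

open NormedSpace Matrix

/-! `√-1 • B` is Hermitian, so it is `U D U*` with `U` unitary and `D` real diagonal.
Being power series, `cosh` and `shc` commute with the algebra automorphism `X ↦ U X U*` and act
entrywise on diagonal matrices, so the two determinants are `∏ cosh λᵢ` and `∏ shc λᵢ` over the
real eigenvalues `λᵢ`. Both factors are positive: `cosh λ > 0`, and `shc λ = ∑ λ^(2k) / (2k+1)!`
has nonnegative terms and constant term `1`. -/

theorem Matrix.isHermitian_I_smul_map_ofReal {m : Type*} {B : Matrix m m ℝ} (hB : Bᵀ = -B) :
    (Complex.I • B.map Complex.ofReal).IsHermitian := by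
  ext i j
  have := congrFun (congrFun hB i) j
  simp_all [Matrix.transpose_apply]

theorem Matrix.det_conjStarAlgAut {m R : Type*} [Fintype m] [DecidableEq m] [CommRing R]
    [StarRing R] (U : unitary (Matrix m m R)) (X : Matrix m m R) :
    (Unitary.conjStarAlgAut R _ U X).det = X.det := by
  rw [Unitary.conjStarAlgAut_apply, det_mul, det_mul, mul_right_comm, ← det_mul,
    Unitary.mul_star_self_of_mem U.2, det_one, one_mul]

theorem Complex.cosh_ofReal_ne_zero (x : ℝ) : Complex.cosh x ≠ 0 := by
  exact_mod_cast (Real.cosh_pos x).ne'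

def Complex.shc (z : ℂ) : ℂ := ∑' k : ℕ, ((2 * k + 1).factorial : ℂ)⁻¹ * z ^ (2 * k)

theorem Real.summable_shc_series (x : ℝ) :
    Summable fun k : ℕ => ((2 * k + 1).factorial : ℝ)⁻¹ * x ^ (2 * k) := by
  refine .of_nonneg_of_le (fun k => ?_) (fun k => ?_) (Real.summable_pow_div_factorial (x ^ 2))
  · rw [pow_mul]; positivity
  · rw [pow_mul, div_eq_inv_mul]
    gcongr
    omega

theorem Complex.summable_shc_series (z : ℂ) :
    Summable fun k : ℕ => ((2 * k + 1).factorial : ℂ)⁻¹ * z ^ (2 * k) :=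
  .of_norm <| by simpa using Real.summable_shc_series ‖z‖

theorem Complex.shc_ofReal_ne_zero (x : ℝ) : shc x ≠ 0 := by
  have hpos : 0 < ∑' k : ℕ, ((2 * k + 1).factorial : ℝ)⁻¹ * x ^ (2 * k) :=
    (Real.summable_shc_series x).tsum_pos (fun k => by rw [pow_mul]; positivity) 0 (by simp)
  have hreal : shc x = ↑(∑' k : ℕ, ((2 * k + 1).factorial : ℝ)⁻¹ * x ^ (2 * k)) := by
    rw [shc, Complex.ofReal_tsum]
    push_cast
    rfl
  rw [hreal]
  exact_mod_cast hpos.ne'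

section

variable {n : ℕ}

theorem mcosh_diagonal (d : Fin n → ℂ) :
    mcosh (diagonal d) = diagonal fun i => Complex.cosh (d i) := by
  rw [mcosh, diagonal_neg, exp_diagonal, exp_diagonal, diagonal_add, ← diagonal_smul]
  congr 1
  ext i
  simp only [Pi.coe_exp, Pi.smul_apply, smul_eq_mul, Complex.cosh, Complex.exp_eq_exp_ℂ]
  ring

theorem mshc_diagonal (d : Fin n → ℂ) :
    mshc (diagonal d) = diagonal fun i => Complex.shc (d i) := by
  simp only [mshc, diagonal_pow, ← diagonal_smul, ← diagonal_tsum]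
  congr 1
  ext i
  rw [tsum_apply (Pi.summable.2 fun i => by simpa using Complex.summable_shc_series (d i))]
  simp [Complex.shc]

variable {F : Type*} [EquivLike F (Matrix (Fin n) (Fin n) ℂ) (Matrix (Fin n) (Fin n) ℂ)]
  [AlgEquivClass F ℂ (Matrix (Fin n) (Fin n) ℂ) (Matrix (Fin n) (Fin n) ℂ)]

theorem mcosh_map (e : F) (X : Matrix (Fin n) (Fin n) ℂ) : mcosh (e X) = e (mcosh X) := by
  have he : Continuous e :=
    (AlgEquivClass.toAlgEquiv e : _ ≃ₐ[ℂ] _).toLinearMap.continuous_of_finiteDimensional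
  -- The operator norm only serves to invoke the normed-algebra lemma; `exp` does not depend on it.
  have hexp (Y : Matrix (Fin n) (Fin n) ℂ) : e (exp Y) = exp (e Y) :=
    open scoped Norms.Operator in NormedSpace.map_exp e he Y
  rw [mcosh, mcosh, map_smul, map_add, hexp, hexp, map_neg]

theorem mshc_map (e : F) (X : Matrix (Fin n) (Fin n) ℂ) : mshc (e X) = e (mshc X) := by
  simp only [mshc, ← map_pow, ← map_smul]
  exact
    (AlgEquivClass.toAlgEquiv e : _ ≃ₐ[ℂ] _).toLinearEquiv.toContinuousLinearEquiv.map_tsum.symm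

end

/-- **Remark A.2:** for a real skew-symmetric matrix `B`,
`det(cosh(√-1 B)) ≠ 0` and `det(shc(√-1 B)) ≠ 0`. -/
theorem det_mcosh_ne_zero_and_det_mshc_ne_zero {n : ℕ}
    (B : Matrix (Fin n) (Fin n) ℝ) (hB : Bᵀ = -B) :
    (mcosh (Complex.I • B.map Complex.ofReal)).det ≠ 0 ∧
    (mshc (Complex.I • B.map Complex.ofReal)).det ≠ 0 := by
  have hA := Matrix.isHermitian_I_smul_map_ofReal hB
  rw [hA.spectral_theorem, mcosh_map, mshc_map, det_conjStarAlgAut, det_conjStarAlgAut,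
    mcosh_diagonal, mshc_diagonal, det_diagonal, det_diagonal]
  exact ⟨Finset.prod_ne_zero_iff.2 fun i _ => Complex.cosh_ofReal_ne_zero _,
    Finset.prod_ne_zero_iff.2 fun i _ => Complex.shc_ofReal_ne_zero _⟩
end
end
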